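/- arXiv:1601.03199 — 3 statements merged into one kernel-verified Lean document; each statement's English description precedes it below -/
import Mathlib

section
/- For all x > 0 one has Ψ⁴(x) + (2/x)·Ψ(x) − 1 < 0, where Ψ(x) = I₁(x)/I₀(x). -/
/-!
`Ψ = I₁/I₀` solves the Riccati equation `Ψ' = 1 - Ψ/x - Ψ²`, because `I₀' = I₁` and
`I₁' = I₀ - I₁/x`. At a zero of `f = Ψ⁴ + 2Ψ/x - 1`, writing `t = Ψ(x)`, this gives
`f'(x) = -t(1 - t²)³`, and `t(1 - t⁴) = 2t²/x > 0` makes it negative; so `f` can never rise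
through `0`. It remains to see `f < 0` on `(0, 1]`: with `s = x²/4` the power series give
`Ψ ≤ x/2` and `1 - 2Ψ/x ≥ s(1 - s)/2`, so `f ≤ s² - s(1 - s)/2 < 0`.
-/

open Real Filter Topology

/-- The modified Bessel function of the first kind of real order `ν`. -/
noncomputable def besselI (ν x : ℝ) : ℝ :=
  ∑' m : ℕ, (x / 2) ^ (2 * (m : ℝ) + ν) / ((m.factorial : ℝ) * Real.Gamma ((m : ℝ) + ν + 1))

/-- `Ψ_ν(x) = I_{ν+1}(x) / I_ν(x)`. -/
noncomputable def psi (ν x : ℝ) : ℝ := besselI (ν + 1) x / besselI ν x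

open scoped Nat

theorem hasDerivAt_tsum_mul_pow {a : ℕ → ℝ}
    (ha : ∀ r : ℝ, Summable fun m => |a m| * r ^ m) (s : ℝ) :
    HasDerivAt (fun z => ∑' m, a m * z ^ m) (∑' m, (m + 1) * a (m + 1) * s ^ m) s := by
  set R := |s| + 1
  have hR : 1 ≤ R := le_add_of_nonneg_left (abs_nonneg s)
  have hs : s ∈ Set.Ioo (-R) R := abs_lt.mp (lt_add_one |s|)
  have hbound : ∀ m, ∀ y ∈ Set.Ioo (-R) R,
      ‖a m * (m * y ^ (m - 1))‖ ≤ |a m| * (2 * R) ^ m := by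
    intro m y hy
    have hy : |y| ≤ R := abs_le.mpr ⟨hy.1.le, hy.2.le⟩
    have hm : (m : ℝ) ≤ 2 ^ m := by exact_mod_cast Nat.lt_two_pow_self.le
    calc ‖a m * (m * y ^ (m - 1))‖ = |a m| * (m * |y| ^ (m - 1)) := by
          simp
      _ ≤ |a m| * (2 ^ m * R ^ m) := by
          gcongr
          exact (pow_le_pow_left₀ (abs_nonneg y) hy _).trans (pow_le_pow_right₀ hR (m.sub_le 1))
      _ = |a m| * (2 * R) ^ m := by rw [mul_pow]
  have hsum : Summable fun m => a m * s ^ m :=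
    .of_norm_bounded (ha |s|) fun m => by simp
  have hderiv := hasDerivAt_tsum_of_isPreconnected (ha (2 * R)) isOpen_Ioo isPreconnected_Ioo
    (fun m y _ => (hasDerivAt_pow m y).const_mul (a m)) hbound hs hsum hs
  have hsum' : Summable fun m => a m * (m * s ^ (m - 1)) :=
    .of_norm_bounded (ha (2 * R)) fun m => hbound m s hs
  refine hderiv.congr_deriv ?_
  rw [hsum'.tsum_eq_zero_add]
  simp only [CharP.cast_eq_zero, zero_mul, mul_zero, zero_add, Nat.cast_succ, Nat.add_sub_cancel]
  exact tsum_congr fun m => by ring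

noncomputable def besselSeries (n : ℕ) (s : ℝ) : ℝ :=
  ∑' m : ℕ, ((m ! : ℝ) * (m + n)!)⁻¹ * s ^ m

theorem summable_abs_besselSeries_term (n : ℕ) (r : ℝ) :
    Summable fun m : ℕ => |((m ! : ℝ) * (m + n)!)⁻¹| * r ^ m := by
  refine .of_norm_bounded (Real.summable_pow_div_factorial |r|) fun m => ?_
  have hfac : (1 : ℝ) ≤ (m + n)! := by exact_mod_cast (m + n).factorial_pos
  rw [abs_of_pos (by positivity : (0 : ℝ) < ((m ! : ℝ) * (m + n)!)⁻¹)]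
  simp only [norm_mul, norm_inv, norm_pow, Real.norm_eq_abs, Nat.abs_cast]
  rw [div_eq_inv_mul]
  gcongr
  exact le_mul_of_one_le_right (by positivity) hfac

theorem summable_besselSeries_term (n : ℕ) (s : ℝ) :
    Summable fun m : ℕ => ((m ! : ℝ) * (m + n)!)⁻¹ * s ^ m :=
  .of_norm_bounded (summable_abs_besselSeries_term n |s|) fun m => by simp

theorem hasDerivAt_besselSeries (n : ℕ) (s : ℝ) :
    HasDerivAt (besselSeries n) (besselSeries (n + 1) s) s := by
  refine (hasDerivAt_tsum_mul_pow (summable_abs_besselSeries_term n) s).congr_deriv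
    (tsum_congr fun m => ?_)
  rw [Nat.factorial_succ, show m + 1 + n = m + (n + 1) by ring]
  push_cast
  field_simp

theorem besselSeries_recurrence (n : ℕ) (s : ℝ) :
    s * besselSeries (n + 2) s + (n + 1) * besselSeries (n + 1) s = besselSeries n s := by
  have hterm : ∀ m : ℕ, ((((m + 1)! : ℝ) * (m + 1 + n)!)⁻¹ * s ^ (m + 1)) =
      s * (((m ! : ℝ) * (m + (n + 2))!)⁻¹ * s ^ m) +
        (n + 1) * ((((m + 1)! : ℝ) * (m + 1 + (n + 1))!)⁻¹ * s ^ (m + 1)) := by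
    intro m
    rw [show m + (n + 2) = m + 1 + n + 1 by ring, show m + 1 + (n + 1) = m + 1 + n + 1 by ring,
      Nat.factorial_succ (m + 1 + n), Nat.factorial_succ m]
    push_cast
    field_simp
    ring
  have hshift :
      Summable fun m : ℕ => (((m + 1)! : ℝ) * (m + 1 + (n + 1))!)⁻¹ * s ^ (m + 1) :=
    (summable_nat_add_iff 1).mpr (summable_besselSeries_term (n + 1) s)
  unfold besselSeries
  rw [(summable_besselSeries_term n s).tsum_eq_zero_add, tsum_congr hterm,
    ((summable_besselSeries_term _ s).mul_left s).tsum_add (hshift.mul_left _),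
    (summable_besselSeries_term (n + 1) s).tsum_eq_zero_add, tsum_mul_left, tsum_mul_left]
  simp only [Nat.factorial_zero, zero_add, pow_zero, Nat.cast_one, one_mul, mul_one,
    Nat.factorial_succ n, Nat.cast_mul]
  push_cast
  field_simp
  ring

theorem inv_factorial_le_besselSeries (n : ℕ) {s : ℝ} (hs : 0 ≤ s) :
    ((n ! : ℝ))⁻¹ ≤ besselSeries n s := by
  refine le_of_eq_of_le ?_ ((summable_besselSeries_term n s).le_tsum 0 fun m _ => by positivity)
  simp

theorem besselSeries_pos (n : ℕ) {s : ℝ} (hs : 0 ≤ s) : 0 < besselSeries n s :=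
  (inv_pos.2 (Nat.cast_pos.2 n.factorial_pos)).trans_le (inv_factorial_le_besselSeries n hs)

theorem besselSeries_succ_le (n : ℕ) {s : ℝ} (hs : 0 ≤ s) :
    besselSeries (n + 1) s ≤ besselSeries n s := by
  refine (summable_besselSeries_term _ s).tsum_le_tsum (fun m => ?_)
    (summable_besselSeries_term n s)
  gcongr
  omega

theorem besselSeries_le_inv_one_sub (n : ℕ) {s : ℝ} (hs0 : 0 ≤ s) (hs1 : s < 1) :
    besselSeries n s ≤ (1 - s)⁻¹ := by
  rw [← tsum_geometric_of_lt_one hs0 hs1]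
  refine (summable_besselSeries_term n s).tsum_le_tsum (fun m => ?_)
    (summable_geometric_of_lt_one hs0 hs1)
  have hfac : (1 : ℝ) ≤ m ! * (m + n)! := by
    exact_mod_cast Nat.one_le_iff_ne_zero.mpr (by positivity)
  exact mul_le_of_le_one_left (by positivity) (inv_le_one_of_one_le₀ hfac)

theorem besselI_natCast (n : ℕ) (x : ℝ) :
    besselI n x = (x / 2) ^ n * besselSeries n ((x / 2) ^ 2) := by
  rw [besselI, besselSeries, ← tsum_mul_left]
  refine tsum_congr fun m => ?_
  rw [show 2 * (m : ℝ) + n = ((2 * m + n : ℕ) : ℝ) by push_cast; ring, Real.rpow_natCast,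
    show (m : ℝ) + n + 1 = ((m + n : ℕ) : ℝ) + 1 by push_cast; ring,
    Real.Gamma_nat_eq_factorial, pow_add, pow_mul]
  ring

theorem besselI_zero_eq (x : ℝ) : besselI 0 x = besselSeries 0 ((x / 2) ^ 2) := by
  simpa using besselI_natCast 0 x

theorem besselI_one_eq (x : ℝ) : besselI 1 x = x / 2 * besselSeries 1 ((x / 2) ^ 2) := by
  simpa using besselI_natCast 1 x

theorem besselI_zero_pos (x : ℝ) : 0 < besselI 0 x := by
  rw [besselI_zero_eq]
  exact besselSeries_pos 0 (sq_nonneg _)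

theorem besselI_one_pos {x : ℝ} (hx : 0 < x) : 0 < besselI 1 x := by
  rw [besselI_one_eq]
  exact mul_pos (half_pos hx) (besselSeries_pos 1 (sq_nonneg _))

theorem hasDerivAt_half_sq (x : ℝ) : HasDerivAt (fun y : ℝ => (y / 2) ^ 2) (x / 2) x := by
  refine (((hasDerivAt_id x).div_const 2).fun_pow 2).congr_deriv ?_
  simp only [Nat.cast_ofNat, id_eq, Nat.add_one_sub_one, pow_one]
  ring

theorem hasDerivAt_besselI_zero (x : ℝ) : HasDerivAt (besselI 0) (besselI 1 x) x := by
  rw [funext besselI_zero_eq, besselI_one_eq, mul_comm]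
  exact (hasDerivAt_besselSeries 0 _).comp x (hasDerivAt_half_sq x)

theorem hasDerivAt_besselI_one {x : ℝ} (hx : x ≠ 0) :
    HasDerivAt (besselI 1) (besselI 0 x - besselI 1 x / x) x := by
  rw [funext besselI_one_eq, besselI_zero_eq]
  refine (((hasDerivAt_id x).div_const 2).mul
    ((hasDerivAt_besselSeries 1 _).comp x (hasDerivAt_half_sq x))).congr_deriv ?_
  have hrec := besselSeries_recurrence 0 ((x / 2) ^ 2)
  simp only [Function.comp_apply, id, CharP.cast_eq_zero, zero_add, one_mul] at hrec ⊢
  rw [mul_div_right_comm, div_div_cancel_left' hx, ← hrec]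
  ring

theorem neg_of_deriv_neg_at_zeros {f f' : ℝ → ℝ} {a : ℝ}
    (hf : ∀ x, a ≤ x → HasDerivAt f (f' x) x) (ha : f a < 0)
    (hzero : ∀ x, a < x → f x = 0 → f' x < 0) {x : ℝ} (hx : a ≤ x) : f x < 0 := by
  have hle : ∀ y, a ≤ y → f y ≤ 0 := fun y hy =>
    image_le_of_deriv_right_lt_deriv_boundary' (B := fun _ => 0) (B' := fun _ => 0)
      (fun z hz => (hf z hz.1).continuousAt.continuousWithinAt)
      (fun z hz => (hf z hz.1).hasDerivWithinAt) ha.le continuousOn_const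
      (fun _ _ => hasDerivWithinAt_const _ _ _)
      (fun z hz hz0 => hzero z (hz.1.lt_of_ne (by rintro rfl; linarith)) hz0) ⟨hy, le_rfl⟩
  rcases hx.eq_or_lt with rfl | hax
  · exact ha
  refine (hle x hx).lt_of_ne fun hx0 => (hzero x hax hx0).ne ?_
  have hmax : IsLocalMax f x :=
    Filter.mem_of_superset (Ioi_mem_nhds hax) fun y hy => hx0 ▸ hle y (le_of_lt hy)
  exact hmax.hasDerivAt_eq_zero (hf x hx)

theorem riccati_deriv_neg_of_eq_zero {t y : ℝ} (hy : 0 < y) (h : t ^ 4 + 2 / y * t - 1 = 0) :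
    (4 * t ^ 3 + 2 / y) * (1 - t / y - t ^ 2) - 2 / y ^ 2 * t < 0 := by
  have ht : t ≠ 0 := by rintro rfl; norm_num at h
  have h2y : 2 / y = (1 - t ^ 4) / t := by
    rw [eq_div_iff ht]
    linarith
  have hderiv : (4 * t ^ 3 + 2 / y) * (1 - t / y - t ^ 2) - 2 / y ^ 2 * t
      = -(t * (1 - t ^ 2) ^ 3) := by
    rw [show 2 / y ^ 2 * t = (2 / y) ^ 2 * t / 2 by ring, show t / y = 2 / y * t / 2 by ring, h2y]
    field_simp
    ring
  have hfactor : 0 < t * (1 - t ^ 2) := by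
    have : 0 < t * (1 - t ^ 2) * (1 + t ^ 2) := by
      rw [show t * (1 - t ^ 2) * (1 + t ^ 2) = t ^ 2 * ((1 - t ^ 4) / t) by field_simp; ring,
        ← h2y]
      positivity
    exact (mul_pos_iff_of_pos_right (by positivity)).mp this
  have hne : 1 - t ^ 2 ≠ 0 := fun h0 => by simp [h0] at hfactor
  rw [hderiv, neg_lt_zero, show t * (1 - t ^ 2) ^ 3 = t * (1 - t ^ 2) * (1 - t ^ 2) ^ 2 by ring]
  exact mul_pos hfactor (by positivity)

theorem pow_four_add_two_div_mul_sub_one_neg_of_riccati {ψ : ℝ → ℝ} {a : ℝ} (ha : 0 < a)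
    (hψ : ∀ x, a ≤ x → HasDerivAt ψ (1 - ψ x / x - ψ x ^ 2) x)
    (hstart : ψ a ^ 4 + 2 / a * ψ a - 1 < 0) {x : ℝ} (hx : a ≤ x) :
    ψ x ^ 4 + 2 / x * ψ x - 1 < 0 := by
  refine neg_of_deriv_neg_at_zeros (f := fun y => ψ y ^ 4 + 2 / y * ψ y - 1)
    (fun y hy => ?_) hstart (fun y hy hy0 => riccati_deriv_neg_of_eq_zero (ha.trans hy) hy0) hx
  have hy0 : y ≠ 0 := (ha.trans_le hy).ne'
  refine ((((hψ y hy).fun_pow 4).add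
    (((hasDerivAt_const y 2).div (hasDerivAt_id y) hy0).mul (hψ y hy))).sub_const 1).congr_deriv ?_
  simp only [Pi.div_apply, id_eq]
  field_simp
  ring

theorem psi_zero_eq (x : ℝ) : psi 0 x = besselI 1 x / besselI 0 x := by
  rw [psi, zero_add]

theorem hasDerivAt_psi_zero {x : ℝ} (hx : x ≠ 0) :
    HasDerivAt (psi 0) (1 - psi 0 x / x - psi 0 x ^ 2) x := by
  rw [funext psi_zero_eq]
  have hI0 := (besselI_zero_pos x).ne'
  refine ((hasDerivAt_besselI_one hx).div (hasDerivAt_besselI_zero x) hI0).congr_deriv ?_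
  field_simp

theorem psi_zero_pow_four_add_two_div_mul_sub_one_neg_of_le_one {x : ℝ} (hx : 0 < x)
    (hx1 : x ≤ 1) : psi 0 x ^ 4 + 2 / x * psi 0 x - 1 < 0 := by
  set s := (x / 2) ^ 2 with hs
  have hs0 : 0 < s := by positivity
  have hs1 : s ≤ 1 / 4 := by nlinarith
  have hF0 := besselSeries_pos 0 hs0.le
  set r := besselSeries 1 s / besselSeries 0 s with hr
  have hr0 : 0 < r := div_pos (besselSeries_pos 1 hs0.le) hF0
  have hr1 : r ≤ 1 := div_le_one_of_le₀ (besselSeries_succ_le 0 hs0.le) hF0.le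
  have hpsi : psi 0 x = x / 2 * r := by
    rw [psi_zero_eq, besselI_one_eq, besselI_zero_eq, mul_div_assoc]
  have hgap : s * (1 - s) / 2 ≤ 1 - r := by
    have hrec := besselSeries_recurrence 0 s
    have hF2 : (2 ! : ℝ)⁻¹ ≤ besselSeries 2 s := inv_factorial_le_besselSeries 2 hs0.le
    have hF0le : besselSeries 0 s ≤ (1 - s)⁻¹ :=
      besselSeries_le_inv_one_sub 0 hs0.le (by linarith)
    simp only [Nat.factorial_two, CharP.cast_eq_zero, zero_add, one_mul] at hrec hF2
    have hF0le' : (1 - s) * besselSeries 0 s ≤ 1 :=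
      (le_div_iff₀' (by linarith)).mp (by rwa [one_div])
    rw [hr, one_sub_div hF0.ne', le_div_iff₀ hF0, show besselSeries 0 s - besselSeries 1 s =
      s * besselSeries 2 s by linarith]
    nlinarith
  calc psi 0 x ^ 4 + 2 / x * psi 0 x - 1 = s ^ 2 * r ^ 4 + r - 1 := by
        rw [hpsi, hs]
        field_simp
    _ ≤ s ^ 2 + r - 1 := by
        linarith [mul_le_of_le_one_right (sq_nonneg s) (pow_le_one₀ (n := 4) hr0.le hr1)]
    _ ≤ s ^ 2 - s * (1 - s) / 2 := by linarith
    _ < 0 := by nlinarith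

theorem stmt_4 (x : ℝ) (hx : 0 < x) :
    (psi 0 x) ^ 4 + (2 / x) * psi 0 x - 1 < 0 := by
  rcases le_or_gt x 1 with hx1 | hx1
  · exact psi_zero_pow_four_add_two_div_mul_sub_one_neg_of_le_one hx hx1
  · exact pow_four_add_two_div_mul_sub_one_neg_of_riccati one_pos
      (fun y hy => hasDerivAt_psi_zero (one_pos.trans_le hy).ne')
      (psi_zero_pow_four_add_two_div_mul_sub_one_neg_of_le_one one_pos le_rfl) hx1.le
end

section
/- Let ν ≥ 0 and K > ν + 1. Then the transcendental equation r = Ψ_ν(2Kr) has a positive real solution, i.e., there exists r > 0 with r = Ψ_ν(2Kr), where Ψ_ν(x) = I_{ν+1}(x)/I_ν(x). -/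
/-!
Write `I_ν(x) = ∑ₘ aₘ(ν, x)`. The terms satisfy `aₘ(ν + 1, x) = (x/2)/(m + ν + 1) · aₘ(ν, x)` and
`aₘ₊₁(ν, x) = (x/2)²/((m + 1)(m + ν + 1)) · aₘ(ν, x)`. Comparing `aₘ(ν + 1, x)` with `aₘ(ν, x)` when
`x/2 ≤ m + ν + 1` and with `aₘ₊₁(ν, x)` otherwise gives `Ψ_ν ≤ 2`. Bounding `I_ν(x)` by
`a₀(ν, x) · exp((x/2)²)` and `I_{ν+1}(x)` from below by its first term gives
`Ψ_ν(x) ≥ x/(2(ν + 1)) · exp(-(x/2)²)`, so `Ψ_ν(2Kr) > r` for small `r > 0` since `K > ν + 1`.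
The intermediate value theorem applied to `r ↦ Ψ_ν(2Kr) - r` on `[r₀, 3]` finishes the proof.
-/

open Real Filter Topology

noncomputable def besselITerm (ν x : ℝ) (m : ℕ) : ℝ :=
  (x / 2) ^ (2 * (m : ℝ) + ν) / ((m.factorial : ℝ) * Real.Gamma ((m : ℝ) + ν + 1))

namespace besselITerm

variable {ν x : ℝ}

lemma pos (hν : 0 ≤ ν) (hx : 0 < x) (m : ℕ) : 0 < besselITerm ν x m := by
  have := Real.rpow_pos_of_pos (half_pos hx) (2 * (m : ℝ) + ν)
  have := Real.Gamma_pos_of_pos (show 0 < (m : ℝ) + ν + 1 by positivity)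
  unfold besselITerm
  positivity

lemma succ (hν : 0 ≤ ν) (hx : 0 < x) (m : ℕ) :
    besselITerm ν x (m + 1) =
      (x / 2) ^ 2 / (((m : ℝ) + 1) * ((m : ℝ) + ν + 1)) * besselITerm ν x m := by
  have hA : (m : ℝ) + ν + 1 ≠ 0 := by positivity
  have hpow :
      (x / 2) ^ (2 * ((m + 1 : ℕ) : ℝ) + ν) = (x / 2) ^ 2 * (x / 2) ^ (2 * (m : ℝ) + ν) := by
    rw [show 2 * ((m + 1 : ℕ) : ℝ) + ν = 2 + (2 * (m : ℝ) + ν) by push_cast; ring,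
      Real.rpow_add (half_pos hx), Real.rpow_two]
  have hΓ : Real.Gamma (((m + 1 : ℕ) : ℝ) + ν + 1) =
      ((m : ℝ) + ν + 1) * Real.Gamma ((m : ℝ) + ν + 1) := by
    rw [show ((m + 1 : ℕ) : ℝ) + ν + 1 = ((m : ℝ) + ν + 1) + 1 by push_cast; ring,
      Real.Gamma_add_one hA]
  have := (Real.Gamma_pos_of_pos (show 0 < (m : ℝ) + ν + 1 by positivity)).ne'
  unfold besselITerm
  rw [hpow, hΓ, Nat.factorial_succ]
  push_cast
  field_simp

lemma order_succ (hν : 0 ≤ ν) (hx : 0 < x) (m : ℕ) :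
    besselITerm (ν + 1) x m = x / 2 / ((m : ℝ) + ν + 1) * besselITerm ν x m := by
  have hA : (m : ℝ) + ν + 1 ≠ 0 := by positivity
  have := (Real.Gamma_pos_of_pos (show 0 < (m : ℝ) + ν + 1 by positivity)).ne'
  unfold besselITerm
  rw [← add_assoc, Real.rpow_add_one (half_pos hx).ne',
    show (m : ℝ) + (ν + 1) + 1 = ((m : ℝ) + ν + 1) + 1 by ring, Real.Gamma_add_one hA]
  field_simp

lemma le_pow_div_factorial (hν : 0 ≤ ν) (hx : 0 < x) (m : ℕ) :
    besselITerm ν x m ≤ besselITerm ν x 0 * ((x / 2) ^ 2) ^ m / m.factorial := by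
  induction m with
  | zero => simp
  | succ m ih =>
    have h1 : 1 ≤ (m : ℝ) + ν + 1 := by linarith [m.cast_nonneg (α := ℝ)]
    calc besselITerm ν x (m + 1)
        = (x / 2) ^ 2 / (((m : ℝ) + 1) * ((m : ℝ) + ν + 1)) * besselITerm ν x m := succ hν hx m
      _ ≤ (x / 2) ^ 2 / ((m : ℝ) + 1) * besselITerm ν x m := by
          gcongr
          · exact (pos hν hx m).le
          · exact le_mul_of_one_le_right (by positivity) h1
      _ ≤ (x / 2) ^ 2 / ((m : ℝ) + 1) * (besselITerm ν x 0 * ((x / 2) ^ 2) ^ m / m.factorial) := by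
          gcongr
      _ = besselITerm ν x 0 * ((x / 2) ^ 2) ^ (m + 1) / (m + 1).factorial := by
          rw [Nat.factorial_succ]; push_cast; field_simp; ring

lemma order_succ_le (hν : 0 ≤ ν) (hx : 0 < x) (m : ℕ) :
    besselITerm (ν + 1) x m ≤ besselITerm ν x m + besselITerm ν x (m + 1) := by
  have ha := pos hν hx m
  have hA : 0 < (m : ℝ) + ν + 1 := by positivity
  rw [order_succ hν hx, succ hν hx]
  rcases le_or_gt (x / 2) ((m : ℝ) + ν + 1) with h | h
  · exact le_add_of_le_of_nonneg (mul_le_of_le_one_left ha.le ((div_le_one hA).2 h))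
      (by positivity)
  · have hm : (m : ℝ) + 1 ≤ x / 2 := by linarith
    have hcoef : x / 2 / ((m : ℝ) + ν + 1) ≤ (x / 2) ^ 2 / (((m : ℝ) + 1) * ((m : ℝ) + ν + 1)) := by
      rw [div_le_div_iff₀ hA (by positivity)]
      have : 0 ≤ x / 2 * ((m : ℝ) + ν + 1) := by positivity
      nlinarith
    exact le_add_of_nonneg_of_le ha.le (mul_le_mul_of_nonneg_right hcoef ha.le)

end besselITerm

section besselI

variable {ν x : ℝ}

lemma besselI_eq_tsum_besselITerm : besselI ν x = ∑' m, besselITerm ν x m := rfl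

lemma summable_besselITerm (hν : 0 ≤ ν) (hx : 0 < x) : Summable (besselITerm ν x) :=
  .of_nonneg_of_le (fun m => (besselITerm.pos hν hx m).le) (besselITerm.le_pow_div_factorial hν hx)
    (by simpa only [mul_div_assoc] using (Real.summable_pow_div_factorial _).mul_left _)

lemma besselI_pos (hν : 0 ≤ ν) (hx : 0 < x) : 0 < besselI ν x :=
  (summable_besselITerm hν hx).tsum_pos (fun m => (besselITerm.pos hν hx m).le) 0
    (besselITerm.pos hν hx 0)

lemma besselITerm_le_besselI (hν : 0 ≤ ν) (hx : 0 < x) (m : ℕ) : besselITerm ν x m ≤ besselI ν x :=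
  (summable_besselITerm hν hx).le_tsum m fun k _ => (besselITerm.pos hν hx k).le

lemma besselI_le_mul_exp (hν : 0 ≤ ν) (hx : 0 < x) :
    besselI ν x ≤ besselITerm ν x 0 * Real.exp ((x / 2) ^ 2) := by
  have hexp : HasSum (fun m : ℕ => besselITerm ν x 0 * ((x / 2) ^ 2) ^ m / m.factorial)
      (besselITerm ν x 0 * Real.exp ((x / 2) ^ 2)) := by
    simpa only [mul_div_assoc, Real.exp_eq_exp_ℝ] using
      (NormedSpace.expSeries_div_hasSum_exp ((x / 2) ^ 2)).mul_left (besselITerm ν x 0)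
  exact hasSum_le (besselITerm.le_pow_div_factorial hν hx) (summable_besselITerm hν hx).hasSum hexp

lemma besselI_add_one_le_two_mul (hν : 0 ≤ ν) (hx : 0 < x) :
    besselI (ν + 1) x ≤ 2 * besselI ν x := by
  have hs := summable_besselITerm hν hx
  have hshift : Summable fun m => besselITerm ν x (m + 1) := (summable_nat_add_iff 1).2 hs
  calc besselI (ν + 1) x
      ≤ ∑' m, (besselITerm ν x m + besselITerm ν x (m + 1)) :=
        (summable_besselITerm (by linarith) hx).tsum_le_tsum (besselITerm.order_succ_le hν hx)
          (hs.add hshift)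
    _ = besselI ν x + (besselI ν x - besselITerm ν x 0) := by
        rw [hs.tsum_add hshift, besselI_eq_tsum_besselITerm, hs.tsum_eq_zero_add]
        ring
    _ ≤ 2 * besselI ν x := by linarith [besselITerm.pos hν hx 0]

lemma continuousOn_besselI (hν : 0 ≤ ν) : ContinuousOn (besselI ν) (Set.Ioi 0) := by
  intro x (hx : 0 < x)
  have hcont : ContinuousOn (besselI ν) (Set.Ioc 0 (x + 1)) := by
    refine continuousOn_tsum (fun m => ?_) (summable_besselITerm hν (by linarith : 0 < x + 1))
      fun m y hy => ?_
    · exact (ContinuousOn.rpow_const (by fun_prop) fun y hy => Or.inl (half_pos hy.1).ne').div_const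
        _
    · change ‖besselITerm ν y m‖ ≤ _
      rw [Real.norm_of_nonneg (besselITerm.pos hν hy.1 m).le]
      unfold besselITerm
      gcongr
      · exact (half_pos hy.1).le
      · exact hy.2
  exact (hcont.continuousAt (Ioc_mem_nhds hx (by linarith))).continuousWithinAt

end besselI

section psi

variable {ν x : ℝ}

lemma psi_le_two (hν : 0 ≤ ν) (hx : 0 < x) : psi ν x ≤ 2 :=
  div_le_of_le_mul₀ (besselI_pos hν hx).le zero_le_two (besselI_add_one_le_two_mul hν hx)

lemma div_mul_exp_le_psi (hν : 0 ≤ ν) (hx : 0 < x) :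
    x / 2 / (ν + 1) * Real.exp (-(x / 2) ^ 2) ≤ psi ν x := by
  rw [psi, le_div_iff₀ (besselI_pos hν hx)]
  calc x / 2 / (ν + 1) * Real.exp (-(x / 2) ^ 2) * besselI ν x
      ≤ x / 2 / (ν + 1) * Real.exp (-(x / 2) ^ 2) *
          (besselITerm ν x 0 * Real.exp ((x / 2) ^ 2)) := by
        gcongr
        exact besselI_le_mul_exp hν hx
    _ = besselITerm (ν + 1) x 0 := by
        rw [besselITerm.order_succ hν hx, mul_mul_mul_comm, ← Real.exp_add]
        simp
    _ ≤ besselI (ν + 1) x := besselITerm_le_besselI (by linarith) hx 0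

lemma continuousOn_psi (hν : 0 ≤ ν) : ContinuousOn (psi ν) (Set.Ioi 0) :=
  (continuousOn_besselI (by linarith)).div (continuousOn_besselI hν) fun _ hx =>
    (besselI_pos hν hx).ne'

end psi

theorem stmt_9 (ν K : ℝ) (hν : 0 ≤ ν) (hK : ν + 1 < K) :
    ∃ r : ℝ, 0 < r ∧ r = psi ν (2 * K * r) := by
  have hK₀ : 0 < K := by linarith
  obtain ⟨r₀, ⟨hr₀3, hsmall⟩, hr₀⟩ :
      ∃ r₀, (r₀ ≤ 3 ∧ (ν + 1) / K < Real.exp (-(K * r₀) ^ 2)) ∧ 0 < r₀ := by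
    have hlim : Tendsto (fun r => Real.exp (-(K * r) ^ 2)) (𝓝 0) (𝓝 1) :=
      (by fun_prop : Continuous fun r => Real.exp (-(K * r) ^ 2)).tendsto' 0 1 (by simp)
    have hnear : ∀ᶠ r in 𝓝 (0 : ℝ), r ≤ 3 ∧ (ν + 1) / K < Real.exp (-(K * r) ^ 2) :=
      (eventually_le_nhds (by norm_num)).and
        (hlim.eventually (lt_mem_nhds ((div_lt_one hK₀).2 hK)))
    exact ((hnear.filter_mono nhdsWithin_le_nhds).and (self_mem_nhdsWithin (s := Set.Ioi 0))).exists
  have hcont : ContinuousOn (fun r => psi ν (2 * K * r) - r) (Set.Icc r₀ 3) :=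
    ((continuousOn_psi hν).comp (by fun_prop) fun r hr => by
      simp only [Set.mem_Ioi]; nlinarith [hr.1]).sub continuousOn_id
  have hlarge : psi ν (2 * K * 3) - 3 < 0 := by
    linarith [psi_le_two hν (by positivity : 0 < 2 * K * 3)]
  have hstart : 0 < psi ν (2 * K * r₀) - r₀ := by
    have h := div_mul_exp_le_psi hν (by positivity : 0 < 2 * K * r₀)
    rw [show 2 * K * r₀ / 2 = K * r₀ by ring] at h
    have : r₀ < K * r₀ / (ν + 1) * Real.exp (-(K * r₀) ^ 2) := by
      calc r₀ = K * r₀ / (ν + 1) * ((ν + 1) / K) := by field_simp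
        _ < _ := by gcongr
    linarith
  obtain ⟨r, hr, hroot⟩ := intermediate_value_Icc' hr₀3 hcont ⟨hlarge.le, hstart.le⟩
  exact ⟨r, hr₀.trans_le hr.1, by linarith [hroot]⟩
end

section
/- Let ν ≥ 0, K > ν + 1, and let r > 0 satisfy r = Ψ_ν(2Kr), where Ψ_ν(x) = I_{ν+1}(x)/I_ν(x). Then r < √(1 − 1/(2K)). -/
open Real Filter Topology

/-!
Write `I_ν(x) = (x/2)^ν g_ν(x²/4)` with the entire series `g_ν(y) = ∑ y^m / (m! Γ(m+ν+1))`,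
so that `g_ν' = g_{ν+1}` and `g_ν = (ν+1) g_{ν+1} + y g_{ν+2}`. The Riccati expression
`1 - (2ν+1) Ψ_ν(x) / x - Ψ_ν(x)²` equals `G(y) / g_ν(y)²` for
`G = g_ν² - (ν+1/2) g_ν g_{ν+1} - y g_{ν+1}²`, and the recurrence gives
`(y^(ν+1/2) G)' = (ν+1/2)/2 · y^(ν-1/2) g_ν g_{ν+1} > 0`. Since `y^(ν+1/2) G` vanishes at `0`,
`G > 0` for `y > 0`. At a fixed point `r = Ψ_ν(2Kr)` this reads
`r² < 1 - (2ν+1)/(2K) ≤ 1 - 1/(2K)`.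
-/

open scoped Nat

section EntireSeries

variable {c : ℕ → ℝ} {C : ℝ}

theorem summable_mul_pow_of_abs_le_div_factorial (hc : ∀ m, |c m| ≤ C / m !) (y : ℝ) :
    Summable fun m => c m * y ^ m := by
  refine ((Real.summable_pow_div_factorial |y|).mul_left C).of_norm_bounded fun m => ?_
  rw [Real.norm_eq_abs, abs_mul, abs_pow, mul_div_assoc', ← div_mul_eq_mul_div]
  gcongr
  exact hc m

theorem hasDerivAt_tsum_mul_pow_of_abs_le_div_factorial (hc : ∀ m, |c m| ≤ C / m !) (y : ℝ) :
    HasDerivAt (fun z => ∑' m, c m * z ^ m) (∑' m, (m + 1) * c (m + 1) * y ^ m) y := by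
  set R := |y| + 1
  have hC : 0 ≤ C := by simpa using (abs_nonneg _).trans (hc 0)
  have hshift : (fun z => ∑' m, c m * z ^ m) = fun z => c 0 + ∑' m, c (m + 1) * z ^ (m + 1) := by
    funext z
    rw [(summable_mul_pow_of_abs_le_div_factorial hc z).tsum_eq_zero_add, pow_zero, mul_one]
  have hterm (m : ℕ) (z : ℝ) :
      HasDerivAt (fun w => c (m + 1) * w ^ (m + 1)) ((m + 1) * c (m + 1) * z ^ m) z := by
    refine ((hasDerivAt_pow (m + 1) z).const_mul (c (m + 1))).congr_deriv ?_
    rw [Nat.add_sub_cancel]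
    push_cast
    ring
  have hbound (m : ℕ) (z : ℝ) (hz : z ∈ Set.Ioo (-R) R) :
      ‖(m + 1) * c (m + 1) * z ^ m‖ ≤ C * (R ^ m / m !) := by
    have hcm : (m + 1) * |c (m + 1)| ≤ C / m ! := by
      have := hc (m + 1)
      rw [Nat.factorial_succ, Nat.cast_mul, le_div_iff₀ (by positivity)] at this
      rw [le_div_iff₀ (by positivity)]
      push_cast at this
      linarith
    have hzR : |z| ≤ R := abs_le.mpr ⟨hz.1.le, hz.2.le⟩
    rw [Real.norm_eq_abs, abs_mul, abs_mul, abs_pow, abs_of_pos (by positivity : (0 : ℝ) < m + 1),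
      mul_div_assoc', ← div_mul_eq_mul_div]
    gcongr
  have hyR : y ∈ Set.Ioo (-R) R := ⟨by linarith [neg_abs_le y], by linarith [le_abs_self y]⟩
  rw [hshift]
  exact (hasDerivAt_tsum_of_isPreconnected ((Real.summable_pow_div_factorial R).mul_left C)
    isOpen_Ioo (convex_Ioo _ _).isPreconnected (fun m z _ => hterm m z) hbound hyR
    ((summable_nat_add_iff 1).mpr (summable_mul_pow_of_abs_le_div_factorial hc y)) hyR).const_add _

end EntireSeries

section ReducedBessel

variable {ν : ℝ}

noncomputable def besselCoeff (ν : ℝ) (m : ℕ) : ℝ := (m ! * Gamma (m + ν + 1))⁻¹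

noncomputable def reducedBesselI (ν y : ℝ) : ℝ := ∑' m, besselCoeff ν m * y ^ m

theorem factorial_mul_Gamma_le_Gamma_nat_add (hν : 0 ≤ ν) (m : ℕ) :
    m ! * Gamma (ν + 1) ≤ Gamma (m + ν + 1) := by
  induction m with
  | zero => simp
  | succ n ih =>
    have hΓ : Gamma (n + 1 + ν + 1) = (n + ν + 1) * Gamma (n + ν + 1) := by
      rw [← Gamma_add_one (s := n + ν + 1) (by positivity)]; ring_nf
    rw [Nat.factorial_succ, Nat.cast_mul, Nat.cast_succ, hΓ, mul_assoc]
    gcongr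
    linarith

theorem besselCoeff_pos (hν : -1 < ν) (m : ℕ) : 0 < besselCoeff ν m := by
  have : 0 < Gamma (m + ν + 1) := Gamma_pos_of_pos (by linarith [m.cast_nonneg (α := ℝ)])
  unfold besselCoeff
  positivity

theorem abs_besselCoeff_le (hν : 0 ≤ ν) (m : ℕ) :
    |besselCoeff ν m| ≤ (Gamma (ν + 1))⁻¹ / m ! := by
  have hΓ : 0 < Gamma (ν + 1) := Gamma_pos_of_pos (by positivity)
  have hm : (1 : ℝ) ≤ m ! := by exact_mod_cast m.factorial_pos
  rw [abs_of_pos (besselCoeff_pos (by linarith) m), besselCoeff]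
  calc ((m ! : ℝ) * Gamma (m + ν + 1))⁻¹ ≤ ((m ! : ℝ) * (m ! * Gamma (ν + 1)))⁻¹ := by
        gcongr; exact factorial_mul_Gamma_le_Gamma_nat_add hν m
    _ ≤ ((m ! : ℝ) * Gamma (ν + 1))⁻¹ := by gcongr; exact le_mul_of_one_le_left (by positivity) hm
    _ = (Gamma (ν + 1))⁻¹ / m ! := by rw [div_eq_mul_inv, ← mul_inv, mul_comm]

theorem succ_mul_besselCoeff_succ (m : ℕ) :
    (m + 1) * besselCoeff ν (m + 1) = besselCoeff (ν + 1) m := by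
  rw [besselCoeff, besselCoeff, Nat.factorial_succ]
  push_cast
  rw [show (m : ℝ) + 1 + ν + 1 = m + (ν + 1) + 1 by ring]
  field_simp

theorem besselCoeff_eq_mul_besselCoeff_add_one (hν : -1 < ν) (m : ℕ) :
    besselCoeff ν m = (m + ν + 1) * besselCoeff (ν + 1) m := by
  have hs : (m : ℝ) + ν + 1 ≠ 0 := by linarith [m.cast_nonneg (α := ℝ)]
  rw [besselCoeff, besselCoeff, show (m : ℝ) + (ν + 1) + 1 = m + ν + 1 + 1 by ring,
    Gamma_add_one hs]
  field_simp

theorem summable_besselCoeff_mul_pow (hν : 0 ≤ ν) (y : ℝ) :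
    Summable fun m => besselCoeff ν m * y ^ m :=
  summable_mul_pow_of_abs_le_div_factorial (abs_besselCoeff_le hν) y

theorem hasDerivAt_reducedBesselI (hν : 0 ≤ ν) (y : ℝ) :
    HasDerivAt (reducedBesselI ν) (reducedBesselI (ν + 1) y) y := by
  have := hasDerivAt_tsum_mul_pow_of_abs_le_div_factorial (abs_besselCoeff_le hν) y
  simp only [succ_mul_besselCoeff_succ] at this
  exact this

theorem reducedBesselI_pos (hν : 0 ≤ ν) {y : ℝ} (hy : 0 ≤ y) : 0 < reducedBesselI ν y := by
  have hc := besselCoeff_pos (by linarith : -1 < ν)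
  refine (summable_besselCoeff_mul_pow hν y).tsum_pos (fun m => ?_) 0 (by simpa using hc 0)
  exact mul_nonneg (hc m).le (pow_nonneg hy m)

theorem reducedBesselI_eq_add (hν : 0 ≤ ν) (y : ℝ) :
    reducedBesselI ν y = (ν + 1) * reducedBesselI (ν + 1) y + y * reducedBesselI (ν + 2) y := by
  have h1 := ((summable_besselCoeff_mul_pow (by linarith : 0 ≤ ν + 1) y).hasSum).mul_left (ν + 1)
  have h2 := ((summable_besselCoeff_mul_pow (by linarith : 0 ≤ ν + 2) y).hasSum).mul_left y
  have hterm (m : ℕ) :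
      ((m : ℝ) + 1) * besselCoeff (ν + 1) (m + 1) * y ^ (m + 1)
        = y * (besselCoeff (ν + 2) m * y ^ m) := by
    rw [succ_mul_besselCoeff_succ, pow_succ, show ν + 1 + 1 = ν + 2 by ring]
    ring
  have hshift : HasSum (fun m : ℕ => m * besselCoeff (ν + 1) m * y ^ m)
      (y * reducedBesselI (ν + 2) y) := by
    refine (hasSum_nat_add_iff' 1).mp ?_
    simp only [Nat.cast_succ, hterm, Finset.sum_range_one, Nat.cast_zero, zero_mul, sub_zero]
    exact h2
  have hsplit : (fun m : ℕ => (ν + 1) * (besselCoeff (ν + 1) m * y ^ m)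
      + m * besselCoeff (ν + 1) m * y ^ m) = fun m => besselCoeff ν m * y ^ m := by
    funext m
    rw [besselCoeff_eq_mul_besselCoeff_add_one (ν := ν) (by linarith) m]
    ring
  have := h1.add hshift
  rw [hsplit] at this
  exact (summable_besselCoeff_mul_pow hν y).hasSum.unique this

end ReducedBessel

section RiccatiGap

variable {ν : ℝ}

noncomputable def besselGap (ν y : ℝ) : ℝ :=
  reducedBesselI ν y ^ 2 - (ν + 1 / 2) * reducedBesselI ν y * reducedBesselI (ν + 1) y
    - y * reducedBesselI (ν + 1) y ^ 2

theorem hasDerivAt_rpow_mul_besselGap (hν : 0 ≤ ν) {y : ℝ} (hy : 0 < y) :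
    HasDerivAt (fun z => z ^ (ν + 1 / 2) * besselGap ν z)
      (y ^ (ν - 1 / 2) * ((ν + 1 / 2) / 2 * reducedBesselI ν y * reducedBesselI (ν + 1) y)) y := by
  have h0 := hasDerivAt_reducedBesselI hν y
  have h1 : HasDerivAt (reducedBesselI (ν + 1)) (reducedBesselI (ν + 2) y) y := by
    simpa only [show ν + 1 + 1 = ν + 2 by ring] using
      hasDerivAt_reducedBesselI (by linarith : 0 ≤ ν + 1) y
  have hgap := ((h0.pow 2).sub ((h0.const_mul (ν + 1 / 2)).mul h1)).sub
    ((hasDerivAt_id y).mul (h1.pow 2))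
  refine ((hasDerivAt_rpow_const (p := ν + 1 / 2) (Or.inl hy.ne')).mul hgap).congr_deriv ?_
  have hpow : y ^ (ν + 1 / 2) = y ^ (ν - 1 / 2) * y := by
    rw [← rpow_add_one hy.ne']; ring_nf
  simp only [Pi.sub_apply, Pi.mul_apply, Pi.pow_apply, id]
  rw [hpow, show ν + 1 / 2 - 1 = ν - 1 / 2 by ring, reducedBesselI_eq_add hν y]
  norm_num
  ring

theorem continuous_besselGap (hν : 0 ≤ ν) : Continuous (besselGap ν) := by
  have h0 : Continuous (reducedBesselI ν) :=
    continuous_iff_continuousAt.2 fun y => (hasDerivAt_reducedBesselI hν y).continuousAt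
  have h1 : Continuous (reducedBesselI (ν + 1)) :=
    continuous_iff_continuousAt.2 fun y =>
      (hasDerivAt_reducedBesselI (by linarith : 0 ≤ ν + 1) y).continuousAt
  unfold besselGap
  fun_prop

theorem besselGap_pos (hν : 0 ≤ ν) {y : ℝ} (hy : 0 < y) : 0 < besselGap ν y := by
  set H := fun z => z ^ (ν + 1 / 2) * besselGap ν z
  have hp : 0 < ν + 1 / 2 := by linarith
  have hcont : ContinuousOn H (Set.Icc 0 y) :=
    ((continuous_id.rpow_const fun _ => Or.inr hp.le).mul (continuous_besselGap hν)).continuousOn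
  obtain ⟨c, hc, hslope⟩ := exists_hasDerivAt_eq_slope H _ hy hcont
    fun z hz => hasDerivAt_rpow_mul_besselGap hν hz.1
  have hH0 : H 0 = 0 := by simp only [H]; rw [zero_rpow hp.ne', zero_mul]
  have hderiv :
      0 < c ^ (ν - 1 / 2) * ((ν + 1 / 2) / 2 * reducedBesselI ν c * reducedBesselI (ν + 1) c) := by
    have := reducedBesselI_pos hν hc.1.le
    have := reducedBesselI_pos (by linarith : 0 ≤ ν + 1) hc.1.le
    have := rpow_pos_of_pos hc.1 (ν - 1 / 2)
    positivity
  rw [hslope, hH0, sub_zero, sub_zero] at hderiv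
  exact (mul_pos_iff_of_pos_left (rpow_pos_of_pos hy _)).mp
    ((div_pos_iff_of_pos_right hy).mp hderiv)

end RiccatiGap

theorem besselI_eq_rpow_mul_reducedBesselI (ν : ℝ) {x : ℝ} (hx : 0 < x) :
    besselI ν x = (x / 2) ^ ν * reducedBesselI ν (x ^ 2 / 4) := by
  rw [besselI, reducedBesselI, ← tsum_mul_left]
  refine tsum_congr fun m => ?_
  rw [show 2 * (m : ℝ) + ν = ν + (2 * m : ℕ) by push_cast; ring, rpow_add (by positivity),
    rpow_natCast, pow_mul, besselCoeff]
  ring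

theorem psi_eq_div_reducedBesselI (ν : ℝ) {x : ℝ} (hx : 0 < x) :
    psi ν x = x / 2 * reducedBesselI (ν + 1) (x ^ 2 / 4) / reducedBesselI ν (x ^ 2 / 4) := by
  rw [psi, besselI_eq_rpow_mul_reducedBesselI _ hx, besselI_eq_rpow_mul_reducedBesselI _ hx,
    rpow_add_one (by positivity), mul_assoc, mul_div_mul_left _ _ (by positivity)]

theorem psi_sq_add_mul_psi_div_lt_one {ν x : ℝ} (hν : 0 ≤ ν) (hx : 0 < x) :
    psi ν x ^ 2 + (2 * ν + 1) * psi ν x / x < 1 := by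
  have ha := reducedBesselI_pos hν (by positivity : 0 ≤ x ^ 2 / 4)
  have hgap := besselGap_pos hν (by positivity : 0 < x ^ 2 / 4)
  have hsub : 1 - (psi ν x ^ 2 + (2 * ν + 1) * psi ν x / x)
      = besselGap ν (x ^ 2 / 4) / reducedBesselI ν (x ^ 2 / 4) ^ 2 := by
    rw [psi_eq_div_reducedBesselI ν hx, besselGap]
    field_simp
    ring
  have := div_pos hgap (pow_pos ha 2)
  linarith

theorem stmt_13 (ν K r : ℝ) (hν : 0 ≤ ν) (hK : ν + 1 < K) (hr : 0 < r)
    (heq : r = psi ν (2 * K * r)) :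
    r < Real.sqrt (1 - 1 / (2 * K)) := by
  have hK0 : 0 < K := by linarith
  have key := psi_sq_add_mul_psi_div_lt_one hν (by positivity : 0 < 2 * K * r)
  rw [← heq, show (2 * ν + 1) * r / (2 * K * r) = (2 * ν + 1) / (2 * K) by field_simp] at key
  have : 1 / (2 * K) ≤ (2 * ν + 1) / (2 * K) := by gcongr; linarith
  exact lt_sqrt_of_sq_lt (by linarith)
end
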